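/- The map T ↦ f_T, where f_T(x) = T(x)(1), is a monoid isomorphism from the monoid CA(G,A) of cellular automata (under composition) onto the monoid U(A^G, A) of uniformly continuous maps A^G → A equipped with the operation (f₁ ∗ f₂)(x) = f₁((f₂(g⁻¹·x))_{g∈G}). -/

import Mathlib

open scoped Uniformity
/-- The shift action of `G` on `A^G`: `(g · x)(h) = x (g⁻¹ h)`. -/
def shift {G A : Type*} [Group G] (g : G) (x : G → A) : G → A :=
  fun h => x (g⁻¹ * h)

/-- A cellular automaton over `G` with alphabet `A`: there is a finite memory set `S`
and a local rule `μ : A^S → A` with `T x g = μ ((g⁻¹ · x)|_S)`. -/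
def IsCellularAutomaton {G A : Type*} [Group G] (T : (G → A) → (G → A)) : Prop :=
  ∃ S : Finset G, ∃ μ : (S → A) → A,
    ∀ (x : G → A) (g : G), T x g = μ (fun s => shift g⁻¹ x s.1)

/-- The operation `(f₁ ∗ f₂)(x) = f₁ ((f₂ (g⁻¹ · x))_{g ∈ G})`. -/
def starOp {G A : Type*} [Group G] (f₁ f₂ : (G → A) → A) : (G → A) → A :=
  fun x => f₁ (fun g => f₂ (shift g⁻¹ x))

lemma shift_one {G A : Type*} [Group G] (x : G → A) : shift (1 : G) x = x := by
  funext h; simp [shift]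

lemma ca_apply {G A : Type*} [Group G] {T : (G → A) → (G → A)}
    (hT : IsCellularAutomaton T) (x : G → A) (g : G) :
    T x g = T (shift g⁻¹ x) 1 := by
  obtain ⟨S, μ, h⟩ := hT
  rw [h, h]
  congr 1
  funext s
  simp [shift]

/-- Theorem A: `T ↦ f_T`, `f_T x = T x 1`, is a monoid isomorphism from the monoid of
cellular automata (under composition, with identity `id`) onto the monoid of uniformly
continuous maps `A^G → A` with the operation `∗` (whose identity is `p₁ : x ↦ x 1`). -/
theorem stmt8 {G A : Type*} [Group G] [Nonempty A] :
    letI : UniformSpace A := ⊥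
    (∀ T : (G → A) → (G → A), IsCellularAutomaton T →
      UniformContinuous (fun x : G → A => T x 1)) ∧
    (∀ T₁ T₂ : (G → A) → (G → A), IsCellularAutomaton T₁ → IsCellularAutomaton T₂ →
      (∀ x : G → A, T₁ x 1 = T₂ x 1) → T₁ = T₂) ∧
    (∀ f : (G → A) → A, UniformContinuous f →
      ∃ T : (G → A) → (G → A), IsCellularAutomaton T ∧ (fun x : G → A => T x 1) = f) ∧
    (∀ T₁ T₂ : (G → A) → (G → A), IsCellularAutomaton T₁ → IsCellularAutomaton T₂ →
      (fun x : G → A => (T₁ ∘ T₂) x 1) =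
        starOp (fun x : G → A => T₁ x 1) (fun x : G → A => T₂ x 1)) ∧
    ((fun x : G → A => (id x : G → A) 1) = fun x : G → A => x 1) := by
  letI : UniformSpace A := ⊥
  refine ⟨?_, ?_, ?_, ?_, rfl⟩
  · -- uniform continuity
    rintro T ⟨S, μ, h⟩
    have hf : ∀ x : G → A, T x 1 = μ (fun s : S => x s.1) := by
      intro x
      rw [h]
      congr 1
      funext s
      simp [shift]
    have key : {p : (G → A) × (G → A) | ∀ s ∈ S, p.1 s = p.2 s} ∈ 𝓤 (G → A) := by
      rw [Pi.uniformity]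
      refine Filter.mem_iInf_of_iInter S.finite_toSet
        (V := fun i : (S : Set G) => {p : (G → A) × (G → A) | p.1 i.1 = p.2 i.1}) ?_ ?_
      · intro i
        refine Filter.mem_comap.2 ⟨SetRel.id, ?_, ?_⟩
        · rw [bot_uniformity]; exact Filter.mem_principal_self _
        · intro p hp; exact hp
      · intro p hp s hs
        simpa using Set.mem_iInter.1 hp ⟨s, hs⟩
    rw [UniformContinuous, bot_uniformity, Filter.tendsto_principal]
    filter_upwards [key] with p hp
    have : (fun s : S => p.1 s.1) = fun s : S => p.2 s.1 := funext fun s => hp s.1 s.2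
    show (T p.1 1, T p.2 1) ∈ SetRel.id
    simp only [hf, this, SetRel.mem_id]
  · -- injectivity
    intro T₁ T₂ h₁ h₂ he
    funext x g
    rw [ca_apply h₁, ca_apply h₂, he]
  · -- surjectivity
    intro f hf
    have hD : {p : (G → A) × (G → A) | f p.1 = f p.2} ∈ 𝓤 (G → A) := by
      have := hf (by rw [bot_uniformity]; exact Filter.mem_principal_self SetRel.id)
      exact this
    rw [Pi.uniformity, Filter.mem_iInf] at hD
    obtain ⟨I, Ifin, V, hV, hD⟩ := hD
    have hloc : ∀ x y : G → A, (∀ i ∈ I, x i = y i) → f x = f y := by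
      intro x y hxy
      have : (x, y) ∈ ⋂ i, V i := by
        refine Set.mem_iInter.2 fun i => ?_
        obtain ⟨t, ht, hts⟩ := Filter.mem_comap.1 (hV i)
        rw [bot_uniformity, Filter.mem_principal] at ht
        exact hts (ht (by simp [SetRel.mem_id, hxy i.1 i.2]))
      rw [← hD] at this
      exact this
    classical
    set S : Finset G := Ifin.toFinset with hS
    set μ : (S → A) → A :=
      fun y => f (fun g => if hg : g ∈ S then y ⟨g, hg⟩ else Classical.arbitrary A) with hμ
    refine ⟨fun x g => f (shift g⁻¹ x), ⟨S, μ, ?_⟩, ?_⟩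
    · intro x g
      refine hloc _ _ fun i hi => ?_
      have hiS : i ∈ S := by simpa [hS] using hi
      simp [hiS]
    · funext x
      simp [shift_one]
  · -- composition
    intro T₁ T₂ h₁ h₂
    funext x
    show T₁ (T₂ x) 1 = T₁ (fun g => T₂ (shift g⁻¹ x) 1) 1
    congr 1
    funext g
    exact ca_apply h₂ x g
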